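/- The value function V of the two-good problem satisfies the Dynamic Programming Principle: for every h₀ ≥ 0 and every t > 0, V(h₀) = sup over measurable controls ℓ : [0,∞) → [ℓ̲, ℓ̄] of { ∫₀ᵗ e^{−ρs} U(ℓ(s), h^{h₀,ℓ}(s)) ds + e^{−ρt} V(h^{h₀,ℓ}(t)) }, where U(ℓ, h) = ℓ^{1−σ} h^{γ(σ−1)} / (1−σ) + B̃ (1−ℓ)^{1−σ} / (1−σ). -/

import Mathlib

open MeasureTheory Real Set Filter

/-- State trajectory `h^{h₀,ℓ}(t) = e^{−φt} h₀ + φ ∫₀ᵗ e^{−φ(t−s)} ℓ(s) ds`. -/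
noncomputable def traj (φ h₀ : ℝ) (ℓ : ℝ → ℝ) (t : ℝ) : ℝ :=
  Real.exp (-(φ * t)) * h₀ + φ * ∫ s in (0:ℝ)..t, Real.exp (-(φ * (t - s))) * ℓ s

/-- Instantaneous utility of the two-good problem:
`U(ℓ, h) = ℓ^{1−σ} h^{γ(σ−1)} / (1−σ) + B̃ (1−ℓ)^{1−σ} / (1−σ)`, with `B̃ = B^{1−σ}`. -/
noncomputable def U2 (σ γ B ℓ h : ℝ) : ℝ :=
  ℓ ^ (1 - σ) * h ^ (γ * (σ - 1)) / (1 - σ) +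
    B ^ (1 - σ) * (1 - ℓ) ^ (1 - σ) / (1 - σ)

/-- Admissible controls: measurable, with values in `[ℓ̲, ℓ̄]`. -/
def Admissible (lo hi : ℝ) (ℓ : ℝ → ℝ) : Prop :=
  Measurable ℓ ∧ ∀ t, 0 ≤ t → ℓ t ∈ Set.Icc lo hi

/-- Value function of the two-good problem. -/
noncomputable def V (ρ φ σ γ B lo hi h₀ : ℝ) : ℝ :=
  sSup {x | ∃ ℓ : ℝ → ℝ, Admissible lo hi ℓ ∧
    x = ∫ t in Set.Ioi (0:ℝ), Real.exp (-(ρ * t)) * U2 σ γ B (ℓ t) (traj φ h₀ ℓ t)}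

/-!
Every payoff from `h₀` splits as the reward collected on `[0, t)` plus `e^{-ρt}` times the payoff,
from `h(t)`, of the control shifted by `t`: this is the flow property of the trajectory together
with the time-shift invariance of the discounted integral. Conversely, concatenating any control
on `[0, t)` with any control restarted at `h(t)` is admissible. So the payoffs from `h₀` are exactly
these concatenated payoffs, and the principle is the identity "a supremum over pairs is an iterated
supremum". All suprema are finite because trajectories stay in `[0, h₀ + ℓ̄]` and `U` is continuous,
hence bounded, on the compact box `[ℓ̲, ℓ̄] × [0, h₀ + ℓ̄]`.
-/

theorem sSup_pairs_eq_sSup_add_mul_sSup {ι : Type*} {P : ι → Prop} {r : ι → ℝ}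
    {g : ι → ι → ℝ} {c : ℝ} (hc : 0 ≤ c) (hP : ∃ i, P i)
    (hg : ∀ i, P i → BddAbove {w | ∃ j, P j ∧ w = g i j})
    (hbdd : BddAbove {v | ∃ i j, P i ∧ P j ∧ v = r i + c * g i j}) :
    sSup {v | ∃ i j, P i ∧ P j ∧ v = r i + c * g i j} =
      sSup {v | ∃ i, P i ∧ v = r i + c * sSup {w | ∃ j, P j ∧ w = g i j}} := by
  obtain ⟨i₀, hi₀⟩ := hP
  set G : ι → ℝ := fun i => sSup {w | ∃ j, P j ∧ w = g i j}
  have hsup : ∀ i, P i → r i + c * G i ≤ sSup {v | ∃ i j, P i ∧ P j ∧ v = r i + c * g i j} := by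
    intro i hi
    have hmono : Monotone fun w => r i + c * w := fun _ _ h => by
      dsimp only; gcongr
    rw [hmono.map_csSup_of_continuousAt (by fun_prop) ⟨g i i₀, i₀, hi₀, rfl⟩ (hg i hi)
      (A := {w | ∃ j, P j ∧ w = g i j})]
    refine csSup_le ⟨_, _, ⟨i₀, hi₀, rfl⟩, rfl⟩ ?_
    rintro _ ⟨_, ⟨j, hj, rfl⟩, rfl⟩
    exact le_csSup hbdd ⟨i, j, hi, hj, rfl⟩
  have hbdd' : BddAbove {v | ∃ i, P i ∧ v = r i + c * G i} :=
    ⟨_, fun _ ⟨i, hi, hv⟩ => hv ▸ hsup i hi⟩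
  refine le_antisymm (csSup_le ⟨_, i₀, i₀, hi₀, hi₀, rfl⟩ ?_)
    (csSup_le ⟨_, i₀, hi₀, rfl⟩ fun _ ⟨i, hi, hv⟩ => hv ▸ hsup i hi)
  rintro _ ⟨i, j, hi, hj, rfl⟩
  calc r i + c * g i j ≤ r i + c * G i := by
        gcongr; exact le_csSup (hg i hi) ⟨j, hj, rfl⟩
    _ ≤ _ := le_csSup hbdd' ⟨i, hi, rfl⟩

theorem intervalIntegral_congr_Ico {E : Type*} [NormedAddCommGroup E] [NormedSpace ℝ E]
    {f g : ℝ → E} {a b : ℝ} (hab : a ≤ b) (h : EqOn f g (Ico a b)) :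
    ∫ x in a..b, f x = ∫ x in a..b, g x := by
  simp only [intervalIntegral.integral_of_le hab]
  rw [← setIntegral_congr_set Ico_ae_eq_Ioc, ← setIntegral_congr_set Ico_ae_eq_Ioc]
  exact setIntegral_congr_fun measurableSet_Ico h

theorem traj_eq_exp_mul (φ h₀ : ℝ) (ℓ : ℝ → ℝ) (u : ℝ) :
    traj φ h₀ ℓ u = exp (-(φ * u)) * (h₀ + φ * ∫ v in (0 : ℝ)..u, exp (φ * v) * ℓ v) := by
  have h : ∀ v, exp (-(φ * (u - v))) * ℓ v = exp (-(φ * u)) * (exp (φ * v) * ℓ v) := fun v => by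
    rw [← mul_assoc, ← exp_add]; ring_nf
  simp only [traj, h, intervalIntegral.integral_const_mul]
  ring

section Trajectory

variable {φ lo hi h₀ : ℝ} {ℓ : ℝ → ℝ}

theorem traj_add {t s : ℝ} (h0t : IntervalIntegrable ℓ volume 0 t)
    (hts : IntervalIntegrable ℓ volume t (t + s)) :
    traj φ h₀ ℓ (t + s) = traj φ (traj φ h₀ ℓ t) (fun v => ℓ (t + v)) s := by
  have hweight : ∀ {a b}, IntervalIntegrable ℓ volume a b →
      IntervalIntegrable (fun v => exp (φ * v) * ℓ v) volume a b :=
    fun h => h.continuousOn_mul (by fun_prop)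
  have hshift : ∫ v in (0 : ℝ)..s, exp (φ * v) * ℓ (t + v) =
      exp (-(φ * t)) * ∫ v in t..t + s, exp (φ * v) * ℓ v := by
    have h := intervalIntegral.integral_comp_add_left
      (fun v => exp (-(φ * t)) * (exp (φ * v) * ℓ v)) t (a := 0) (b := s)
    rw [add_zero] at h
    rw [← intervalIntegral.integral_const_mul, ← h]
    congr 1; ext v
    rw [← mul_assoc, ← exp_add]; ring_nf
  rw [traj_eq_exp_mul, traj_eq_exp_mul, traj_eq_exp_mul, hshift,
    ← intervalIntegral.integral_add_adjacent_intervals (hweight h0t) (hweight hts),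
    show -(φ * (t + s)) = -(φ * s) + -(φ * t) by ring, exp_add]
  ring

theorem traj_congr {ℓ' : ℝ → ℝ} {u : ℝ} (hu : 0 ≤ u) (h : EqOn ℓ ℓ' (Ico 0 u)) :
    traj φ h₀ ℓ u = traj φ h₀ ℓ' u := by
  unfold traj
  congr 2
  exact intervalIntegral_congr_Ico hu fun _ hv => by simp only [h hv]

theorem Admissible.intervalIntegrable (h : Admissible lo hi ℓ) {a b : ℝ} (ha : 0 ≤ a)
    (hb : 0 ≤ b) : IntervalIntegrable ℓ volume a b := by
  rw [intervalIntegrable_iff]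
  refine Measure.integrableOn_of_bounded (M := max |lo| |hi|) measure_Ioc_lt_top.ne
    h.1.aestronglyMeasurable ?_
  filter_upwards [ae_restrict_mem measurableSet_Ioc] with v hv
  have hv0 : 0 ≤ v := (le_min ha hb).trans hv.1.le
  exact abs_le_max_abs_abs (h.2 v hv0).1 (h.2 v hv0).2

theorem Admissible.comp_const_add (h : Admissible lo hi ℓ) {t : ℝ} (ht : 0 ≤ t) :
    Admissible lo hi (fun v => ℓ (t + v)) :=
  ⟨h.1.comp (measurable_const_add t), fun _ hv => h.2 _ (add_nonneg ht hv)⟩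

theorem Admissible.concat {ℓ' : ℝ → ℝ} (h : Admissible lo hi ℓ) (h' : Admissible lo hi ℓ')
    (t : ℝ) : Admissible lo hi (fun s => if s < t then ℓ s else ℓ' (s - t)) := by
  refine ⟨Measurable.ite (measurableSet_lt measurable_id measurable_const) h.1
    (h'.1.comp (measurable_sub_const t)), fun s hs => ?_⟩
  show (if s < t then ℓ s else ℓ' (s - t)) ∈ Icc lo hi
  split_ifs with hst
  · exact h.2 s hs
  · exact h'.2 _ (sub_nonneg.2 (not_lt.1 hst))

theorem Admissible.traj_mem_Icc (h : Admissible lo hi ℓ) (hlo : 0 ≤ lo) (hφ : 0 ≤ φ)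
    (hh₀ : 0 ≤ h₀) {u : ℝ} (hu : 0 ≤ u) : traj φ h₀ ℓ u ∈ Icc 0 (h₀ + hi) := by
  have hderiv : ∀ v, HasDerivAt (fun v => exp (-(φ * (u - v)))) (φ * exp (-(φ * (u - v)))) v :=
    fun v => by
      have hexponent : HasDerivAt (fun v => -(φ * (u - v))) φ v := by
        simpa using (((hasDerivAt_id v).const_sub u).const_mul φ).fun_neg
      simpa [mul_comm] using hexponent.exp
  have hmass : φ * ∫ v in (0 : ℝ)..u, exp (-(φ * (u - v))) = 1 - exp (-(φ * u)) := by
    rw [← intervalIntegral.integral_const_mul, intervalIntegral.integral_eq_sub_of_hasDerivAt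
      (fun v _ => hderiv v) ((by fun_prop : Continuous fun v => φ * exp (-(φ * (u - v))))
      |>.intervalIntegrable _ _)]
    simp
  have hle : ∫ v in (0 : ℝ)..u, exp (-(φ * (u - v))) * ℓ v ≤
      ∫ v in (0 : ℝ)..u, exp (-(φ * (u - v))) * hi :=
    intervalIntegral.integral_mono_on hu
      ((h.intervalIntegrable le_rfl hu).continuousOn_mul (by fun_prop))
      ((by fun_prop : Continuous fun v => exp (-(φ * (u - v))) * hi).intervalIntegrable _ _)
      fun v hv => mul_le_mul_of_nonneg_left (h.2 v hv.1).2 (exp_pos _).le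
  have hhi : 0 ≤ hi := hlo.trans ((h.2 0 le_rfl).1.trans (h.2 0 le_rfl).2)
  have hdecay : exp (-(φ * u)) ≤ 1 := exp_le_one_iff.2 (by nlinarith)
  rw [intervalIntegral.integral_mul_const] at hle
  refine ⟨add_nonneg (mul_nonneg (exp_pos _).le hh₀) (mul_nonneg hφ ?_), ?_⟩
  · exact intervalIntegral.integral_nonneg hu fun v hv =>
      mul_nonneg (exp_pos _).le (hlo.trans (h.2 v hv.1).1)
  · calc traj φ h₀ ℓ u ≤ exp (-(φ * u)) * h₀ + (1 - exp (-(φ * u))) * hi := by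
          rw [traj, ← hmass, mul_assoc]; gcongr
      _ ≤ h₀ + hi := by nlinarith [exp_pos (-(φ * u))]

theorem Admissible.continuousOn_traj (h : Admissible lo hi ℓ) :
    ContinuousOn (traj φ h₀ ℓ) (Ici 0) := by
  have hprim : ContinuousOn (fun u => ∫ v in (0 : ℝ)..u, exp (φ * v) * ℓ v) (Ici 0) := by
    intro x hx
    have hx1 : 0 ≤ x + 1 := by linarith [mem_Ici.1 hx]
    have hI := (h.intervalIntegrable le_rfl hx1).continuousOn_mul
      (by fun_prop : ContinuousOn (fun v => exp (φ * v)) _)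
    refine (intervalIntegral.continuousOn_primitive_interval' hI left_mem_uIcc x ?_)
      |>.mono_of_mem_nhdsWithin ?_
    · rw [uIcc_of_le hx1]; exact ⟨hx, by linarith⟩
    · rw [uIcc_of_le hx1, ← Ici_inter_Iic]
      exact inter_mem_nhdsWithin _ (Iic_mem_nhds (by linarith))
  rw [show traj φ h₀ ℓ = _ from funext (traj_eq_exp_mul φ h₀ ℓ)]
  fun_prop

end Trajectory

theorem exists_abs_U2_le {σ γ lo hi : ℝ} (B : ℝ) (hγσ : 0 ≤ γ * (σ - 1)) (hlo : 0 < lo)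
    (hhi : hi < 1) (C : ℝ) : ∃ M, ∀ x ∈ Icc lo hi, ∀ h ∈ Icc 0 C, |U2 σ γ B x h| ≤ M := by
  have hcont : ContinuousOn (fun p : ℝ × ℝ => U2 σ γ B p.1 p.2) (Icc lo hi ×ˢ Icc 0 C) := by
    unfold U2
    refine .add (.div_const (.mul ?_ ?_) _) (.div_const (continuousOn_const.mul ?_) _)
    · exact continuousOn_fst.rpow_const fun p hp => Or.inl (hlo.trans_le hp.1.1).ne'
    · exact continuousOn_snd.rpow_const fun _ _ => Or.inr hγσ
    · exact (continuousOn_const.fun_sub continuousOn_fst).rpow_const fun p hp =>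
        Or.inl (by linarith [hp.1.2])
  obtain ⟨M, hM⟩ := (isCompact_Icc.prod isCompact_Icc).exists_bound_of_continuousOn hcont
  exact ⟨M, fun x hx h hh => hM (x, h) ⟨hx, hh⟩⟩

noncomputable def discountedUtility (ρ φ σ γ B h₀ : ℝ) (ℓ : ℝ → ℝ) (s : ℝ) : ℝ :=
  exp (-(ρ * s)) * U2 σ γ B (ℓ s) (traj φ h₀ ℓ s)

noncomputable def payoff (ρ φ σ γ B h₀ : ℝ) (ℓ : ℝ → ℝ) : ℝ :=
  ∫ s in Ioi 0, discountedUtility ρ φ σ γ B h₀ ℓ s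

section Payoff

variable {ρ φ σ γ B lo hi z : ℝ} {ℓ : ℝ → ℝ}

theorem discountedUtility_congr {ℓ' : ℝ → ℝ} {s : ℝ} (hs : 0 ≤ s) (h : EqOn ℓ ℓ' (Icc 0 s)) :
    discountedUtility ρ φ σ γ B z ℓ s = discountedUtility ρ φ σ γ B z ℓ' s := by
  rw [discountedUtility, discountedUtility, h ⟨hs, le_rfl⟩,
    traj_congr hs (h.mono Ico_subset_Icc_self)]

theorem payoff_congr {ℓ' : ℝ → ℝ} (h : EqOn ℓ ℓ' (Ici 0)) :
    payoff ρ φ σ γ B z ℓ = payoff ρ φ σ γ B z ℓ' :=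
  setIntegral_congr_fun measurableSet_Ioi fun _ hs =>
    discountedUtility_congr (le_of_lt hs) (h.mono Icc_subset_Ici_self)

theorem exists_norm_discountedUtility_le (hφ : 0 ≤ φ) (hγσ : 0 ≤ γ * (σ - 1)) (hlo : 0 < lo)
    (hhi : hi < 1) (hz : 0 ≤ z) : ∃ M, ∀ ℓ, Admissible lo hi ℓ → ∀ s, 0 ≤ s →
      ‖discountedUtility ρ φ σ γ B z ℓ s‖ ≤ M * exp (-(ρ * s)) := by
  obtain ⟨M, hM⟩ := exists_abs_U2_le B hγσ hlo hhi (z + hi)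
  refine ⟨M, fun ℓ hℓ s hs => ?_⟩
  rw [discountedUtility, norm_mul, norm_of_nonneg (exp_pos _).le, mul_comm, norm_eq_abs]
  exact mul_le_mul_of_nonneg_right (hM _ (hℓ.2 s hs) _ (hℓ.traj_mem_Icc hlo.le hφ hz hs))
    (exp_pos _).le

theorem integrableOn_const_mul_exp_neg (hρ : 0 < ρ) (M : ℝ) :
    IntegrableOn (fun s => M * exp (-(ρ * s))) (Ioi 0) := by
  have h := (exp_neg_integrableOn_Ioi 0 hρ).const_mul M
  simp only [neg_mul] at h
  exact h

theorem bddAbove_payoff (hρ : 0 < ρ) (hφ : 0 ≤ φ) (hγσ : 0 ≤ γ * (σ - 1)) (hlo : 0 < lo)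
    (hhi : hi < 1) (hz : 0 ≤ z) :
    BddAbove {x | ∃ ℓ, Admissible lo hi ℓ ∧ x = payoff ρ φ σ γ B z ℓ} := by
  obtain ⟨M, hM⟩ := exists_norm_discountedUtility_le (ρ := ρ) (B := B) hφ hγσ hlo hhi hz
  refine ⟨∫ s in Ioi 0, M * exp (-(ρ * s)), ?_⟩
  rintro _ ⟨ℓ, hℓ, rfl⟩
  rw [payoff]
  refine (le_norm_self _).trans
    (norm_integral_le_of_norm_le (integrableOn_const_mul_exp_neg hρ M) ?_)
  filter_upwards [ae_restrict_mem measurableSet_Ioi] with s hs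
  exact hM ℓ hℓ s (le_of_lt hs)

theorem Admissible.integrableOn_discountedUtility (hℓ : Admissible lo hi ℓ) (hρ : 0 < ρ)
    (hφ : 0 ≤ φ) (hγσ : 0 ≤ γ * (σ - 1)) (hlo : 0 < lo) (hhi : hi < 1) (hz : 0 ≤ z) :
    IntegrableOn (discountedUtility ρ φ σ γ B z ℓ) (Ioi 0) := by
  obtain ⟨M, hM⟩ := exists_norm_discountedUtility_le (ρ := ρ) (B := B) hφ hγσ hlo hhi hz
  have htraj : AEMeasurable (traj φ z ℓ) (volume.restrict (Ioi 0)) :=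
    ((hℓ.continuousOn_traj.mono Ioi_subset_Ici_self).aestronglyMeasurable
      measurableSet_Ioi).aemeasurable
  have hU : Measurable fun p : ℝ × ℝ => U2 σ γ B p.1 p.2 := by unfold U2; fun_prop
  refine Integrable.mono' (integrableOn_const_mul_exp_neg hρ M) ?_ ?_
  · exact ((by fun_prop : Continuous fun s => exp (-(ρ * s))).aemeasurable.mul
      (hU.comp_aemeasurable (hℓ.1.aemeasurable.prodMk htraj))).aestronglyMeasurable
  · filter_upwards [ae_restrict_mem measurableSet_Ioi] with s hs
    exact hM ℓ hℓ s (le_of_lt hs)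

theorem Admissible.payoff_eq_add (hℓ : Admissible lo hi ℓ) (hρ : 0 < ρ) (hφ : 0 ≤ φ)
    (hγσ : 0 ≤ γ * (σ - 1)) (hlo : 0 < lo) (hhi : hi < 1) (hz : 0 ≤ z) {t : ℝ} (ht : 0 ≤ t) :
    payoff ρ φ σ γ B z ℓ = (∫ s in (0 : ℝ)..t, discountedUtility ρ φ σ γ B z ℓ s) +
      exp (-(ρ * t)) * payoff ρ φ σ γ B (traj φ z ℓ t) (fun v => ℓ (t + v)) := by
  have hF := hℓ.integrableOn_discountedUtility (B := B) hρ hφ hγσ hlo hhi hz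
  have hsplit : payoff ρ φ σ γ B z ℓ = (∫ s in Ioc 0 t, discountedUtility ρ φ σ γ B z ℓ s) +
      ∫ s in Ioi t, discountedUtility ρ φ σ γ B z ℓ s := by
    rw [payoff, ← Ioc_union_Ioi_eq_Ioi ht, setIntegral_union (Ioc_disjoint_Ioi le_rfl)
      measurableSet_Ioi (hF.mono_set Ioc_subset_Ioi_self) (hF.mono_set (Ioi_subset_Ioi ht))]
  have hshift : ∫ s in Ioi t, discountedUtility ρ φ σ γ B z ℓ s =
      ∫ s in Ioi 0, discountedUtility ρ φ σ γ B z ℓ (t + s) := by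
    have h := (measurePreserving_add_left (volume : Measure ℝ) t).setIntegral_image_emb
      (MeasurableEquiv.addLeft t).measurableEmbedding (discountedUtility ρ φ σ γ B z ℓ) (Ioi 0)
    simpa [image_const_add_Ioi] using h
  have hflow : EqOn (fun s => discountedUtility ρ φ σ γ B z ℓ (t + s))
      (fun s => exp (-(ρ * t)) *
        discountedUtility ρ φ σ γ B (traj φ z ℓ t) (fun v => ℓ (t + v)) s) (Ioi 0) := by
    intro s hs
    simp only [discountedUtility]
    rw [traj_add (hℓ.intervalIntegrable le_rfl ht)
        (hℓ.intervalIntegrable ht (by linarith [hs.out])),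
      show -(ρ * (t + s)) = -(ρ * t) + -(ρ * s) by ring, exp_add, mul_assoc]
  rw [hsplit, hshift, setIntegral_congr_fun measurableSet_Ioi hflow, integral_const_mul,
    intervalIntegral.integral_of_le ht, payoff]

theorem payoff_set_eq_concat (hρ : 0 < ρ) (hφ : 0 ≤ φ) (hγσ : 0 ≤ γ * (σ - 1)) (hlo : 0 < lo)
    (hhi : hi < 1) (hz : 0 ≤ z) {t : ℝ} (ht : 0 ≤ t) :
    {x | ∃ ℓ, Admissible lo hi ℓ ∧ x = payoff ρ φ σ γ B z ℓ} =
      {x | ∃ ℓ ℓ', Admissible lo hi ℓ ∧ Admissible lo hi ℓ' ∧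
        x = (∫ s in (0 : ℝ)..t, discountedUtility ρ φ σ γ B z ℓ s) +
          exp (-(ρ * t)) * payoff ρ φ σ γ B (traj φ z ℓ t) ℓ'} := by
  ext x
  constructor
  · rintro ⟨ℓ, hℓ, rfl⟩
    exact ⟨ℓ, _, hℓ, hℓ.comp_const_add ht, hℓ.payoff_eq_add hρ hφ hγσ hlo hhi hz ht⟩
  · rintro ⟨ℓ, ℓ', hℓ, hℓ', rfl⟩
    set L : ℝ → ℝ := fun s => if s < t then ℓ s else ℓ' (s - t)
    have hL : EqOn L ℓ (Ico 0 t) := fun s hs => if_pos hs.2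
    have hL' : EqOn (fun v => L (t + v)) ℓ' (Ici 0) := fun v hv => by
      simp [L, not_lt.2 (le_add_of_nonneg_right (mem_Ici.1 hv))]
    refine ⟨L, hℓ.concat hℓ' t, ?_⟩
    rw [(hℓ.concat hℓ' t).payoff_eq_add hρ hφ hγσ hlo hhi hz ht, payoff_congr hL',
      traj_congr ht hL, intervalIntegral_congr_Ico ht fun s hs =>
        discountedUtility_congr hs.1 (hL.mono (Icc_subset_Ico_right hs.2))]

end Payoff

theorem V_dynamic_programming_general (ρ φ σ γ B lo hi : ℝ)
    (hρ : 0 < ρ) (hφ : 0 < φ)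
    (hγσ : 1 < γ * (σ - 1)) (hlo : 0 < lo) (hlohi : lo ≤ hi) (hhi : hi < 1)
    (h₀ : ℝ) (hh₀ : 0 ≤ h₀) (t : ℝ) (ht : 0 < t) :
    V ρ φ σ γ B lo hi h₀ =
      sSup {x | ∃ ℓ : ℝ → ℝ, Admissible lo hi ℓ ∧
        x = (∫ s in (0:ℝ)..t, Real.exp (-(ρ * s)) * U2 σ γ B (ℓ s) (traj φ h₀ ℓ s)) +
          Real.exp (-(ρ * t)) * V ρ φ σ γ B lo hi (traj φ h₀ ℓ t)} := by
  have hγσ' : 0 ≤ γ * (σ - 1) := by linarith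
  have hpayoffs := payoff_set_eq_concat (B := B) hρ hφ.le hγσ' hlo hhi hh₀ ht.le
  have hbdd := bddAbove_payoff (B := B) hρ hφ.le hγσ' hlo hhi hh₀
  rw [hpayoffs] at hbdd
  change sSup {x | ∃ ℓ, Admissible lo hi ℓ ∧ x = payoff ρ φ σ γ B h₀ ℓ} = _
  rw [hpayoffs]
  exact sSup_pairs_eq_sSup_add_mul_sSup (exp_pos _).le ⟨fun _ => lo, measurable_const,
    fun _ _ => ⟨le_rfl, hlohi⟩⟩ (fun ℓ hℓ => bddAbove_payoff hρ hφ.le hγσ' hlo hhi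
      (hℓ.traj_mem_Icc hlo.le hφ.le hh₀ ht.le).1) hbdd

/-- the Dynamic Programming Principle for `V`: for every `h₀ ≥ 0` and `t > 0`,
`V(h₀) = sup_ℓ { ∫₀ᵗ e^{−ρs} U(ℓ(s), h^{h₀,ℓ}(s)) ds + e^{−ρt} V(h^{h₀,ℓ}(t)) }`. -/
theorem V_dynamic_programming (ρ φ σ γ B lo hi : ℝ)
    (hρ : 0 < ρ) (hφ : 0 < φ) (hσ : 1 < σ) (hγ0 : 0 < γ) (hγ1 : γ < 1)
    (hγσ : 1 < γ * (σ - 1)) (hB : 0 < B) (hlo : 0 < lo) (hlohi : lo ≤ hi) (hhi : hi < 1)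
    (h₀ : ℝ) (hh₀ : 0 ≤ h₀) (t : ℝ) (ht : 0 < t) :
    V ρ φ σ γ B lo hi h₀ =
      sSup {x | ∃ ℓ : ℝ → ℝ, Admissible lo hi ℓ ∧
        x = (∫ s in (0:ℝ)..t, Real.exp (-(ρ * s)) * U2 σ γ B (ℓ s) (traj φ h₀ ℓ s)) +
          Real.exp (-(ρ * t)) * V ρ φ σ γ B lo hi (traj φ h₀ ℓ t)} :=
  V_dynamic_programming_general ρ φ σ γ B lo hi hρ hφ hγσ hlo hlohi hhi h₀ hh₀ t ht
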